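/- arXiv:1401.2170 — 5 statements merged into one kernel-verified Lean document; each statement's English description precedes it below -/
import Mathlib

section
/- Let K be a commutative ring, σ a type, P = MvPolynomial σ K, I ⊆ P an ideal, A = P/I with quotient map π : P → A. Given a family a : σ → A, let φ : P → A[t] (polynomials in one variable t over A) be the unique K-algebra homomorphism with φ(X_s) = C(π(X_s)) + C(a_s)·t for every s ∈ σ. Assume that for every g ∈ I the coefficient of t¹ in φ(g) is zero (i.e. the derivation D = Σ_s a_s ∂/∂x_s of P descends to a K-linear derivation of A). Then the map q : I → A sending g to the coefficient of t² in φ(g) vanishes on I² and satisfies q(p·g) = π(p)·q(g) for all p ∈ P and g ∈ I; consequently q induces a well-defined A-linear map from the conormal module I/I² to A. -/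
/-!
Statement 0 (Theorem A(1)): for `A = P/I` with `P = MvPolynomial σ K`, a derivation
`D = Σ a_s ∂/∂x_s` of `A` gives, via the degree-2 Taylor coefficient (the Hessian),
a well-defined `A`-linear map `I/I² → A`.

The Taylor expansion is encoded by the `K`-algebra map `φ : P → A[t]` with
`φ(X_s) = C (π (X_s)) + C (a_s) * t`; the coefficient of `t` in `φ g` is `D(g)` and the
coefficient of `t²` is the Hessian value `q(D)(g)`.
-/

private lemma coeff2_mul' {A : Type} [CommRing A] (f g : Polynomial A) :
    (f*g).coeff 2 = f.coeff 0 * g.coeff 2 + f.coeff 1 * g.coeff 1 + f.coeff 2 * g.coeff 0 := by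
  rw [Polynomial.coeff_mul]
  rw [show (Finset.HasAntidiagonal.antidiagonal 2 : Finset (ℕ×ℕ)) = {(0,2),(1,1),(2,0)} from rfl]
  rw [Finset.sum_insert (by decide), Finset.sum_insert (by decide), Finset.sum_singleton]
  ring

theorem hessian_descends_to_conormal_module
    (K : Type) [CommRing K] (σ : Type) (I : Ideal (MvPolynomial σ K))
    (a : σ → (MvPolynomial σ K ⧸ I))
    (φ : MvPolynomial σ K →ₐ[K] Polynomial (MvPolynomial σ K ⧸ I))
    (hφ : ∀ s : σ, φ (MvPolynomial.X s) =
      Polynomial.C (Ideal.Quotient.mk I (MvPolynomial.X s)) + Polynomial.C (a s) * Polynomial.X)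
    -- the derivation `D = Σ a_s ∂/∂x_s` of `P` descends to `A`,
    -- i.e. the coefficient of `t¹` of `φ g` vanishes for `g ∈ I` :
    (hD : ∀ g ∈ I, (φ g).coeff 1 = 0) :
    -- (i) the Hessian map `q : g ↦ coeff of t² in φ g` vanishes on `I²`,
    (∀ g ∈ I ^ 2, (φ g).coeff 2 = 0) ∧
    -- (ii) `q (p * g) = π p * q g` for `p ∈ P`, `g ∈ I`,
    (∀ (p : MvPolynomial σ K), ∀ g ∈ I,
      (φ (p * g)).coeff 2 = Ideal.Quotient.mk I p * (φ g).coeff 2) ∧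
    -- (iii) hence `q` induces a well-defined `A`-linear map `I/I² → A`.
    (∃ q : I.Cotangent →ₗ[MvPolynomial σ K ⧸ I] (MvPolynomial σ K ⧸ I),
      ∀ g : I, q (I.toCotangent g) = (φ (g : MvPolynomial σ K)).coeff 2) := by
  set P := MvPolynomial σ K
  set A := P ⧸ I
  have hsmul : ∀ (p : P) (x : A), p • x = Ideal.Quotient.mk I p * x := by
    intro p x
    obtain ⟨r, rfl⟩ := Ideal.Quotient.mk_surjective x
    rw [← map_mul]; rfl
  -- coefficient 0 of φ p is π p
  have hc0 : ∀ p : P, (φ p).coeff 0 = Ideal.Quotient.mk I p := by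
    have h : (Polynomial.evalRingHom (0:A)).comp (φ : P →+* Polynomial A)
        = (Ideal.Quotient.mk I : P →+* A) := by
      apply MvPolynomial.ringHom_ext
      · intro k
        simp only [RingHom.comp_apply, Polynomial.coe_evalRingHom, RingHom.coe_coe]
        rw [show (MvPolynomial.C k : P) = algebraMap K P k from rfl, AlgHom.commutes,
          Polynomial.algebraMap_apply, Polynomial.eval_C,
          IsScalarTower.algebraMap_apply K P A]
        rfl
      · intro s
        simp [hφ s]
    intro p
    have := congrArg (fun f => f p) h
    simpa [Polynomial.coeff_zero_eq_eval_zero] using this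
  have hg0 : ∀ g ∈ I, (φ g).coeff 0 = 0 := fun g hg => by
    rw [hc0 g, Ideal.Quotient.eq_zero_iff_mem]; exact hg
  have hii : ∀ (p : P), ∀ g ∈ I,
      (φ (p * g)).coeff 2 = Ideal.Quotient.mk I p * (φ g).coeff 2 := by
    intro p g hg
    rw [map_mul, coeff2_mul', hD g hg, hg0 g hg, hc0 p]
    ring
  refine ⟨?_, hii, ?_⟩
  · intro g hg
    rw [pow_two] at hg
    refine Submodule.mul_induction_on hg ?_ ?_
    · intro p hp q hq
      rw [hii p q hq, Ideal.Quotient.eq_zero_iff_mem.2 hp, zero_mul]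
    · intro x y hx hy
      rw [map_add, Polynomial.coeff_add, hx, hy, add_zero]
  · -- the P-linear map I → A given by the Hessian
    let f : I →ₗ[P] A :=
      { toFun := fun x => (φ (x : P)).coeff 2
        map_add' := fun x y => by simp [Polynomial.coeff_add]
        map_smul' := fun p x => by
          simp only [SetLike.val_smul, smul_eq_mul, RingHom.id_apply]
          rw [hii p x x.2, hsmul] }
    have hker : (I • ⊤ : Submodule P I) ≤ LinearMap.ker f := by
      intro x hx
      refine Submodule.smul_induction_on hx ?_ ?_
      · intro p hp y _
        simp only [LinearMap.mem_ker, map_smul, hsmul,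
          Ideal.Quotient.eq_zero_iff_mem.2 hp, zero_mul]
      · intro y z hy hz
        simpa using add_mem hy hz
    let q₀ : I.Cotangent →ₗ[P] A := Submodule.liftQ _ f hker
    refine ⟨q₀.extendScalarsOfSurjective Ideal.Quotient.mk_surjective, fun g => rfl⟩
end

section
/- Let K be a commutative ring and f ∈ K[x] a polynomial. Then A = K[x]/(f) is flat as a K-module if and only if the content ideal c_f ⊆ K of f is generated by an idempotent element of K. -/
set_option maxHeartbeats 1000000
set_option synthInstance.maxHeartbeats 400000
open Polynomial TensorProduct LinearMap

/-- The content ideal of a polynomial: the ideal generated by its coefficients. -/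
def Polynomial.contentIdeal' {K : Type} [CommRing K] (f : Polynomial K) : Ideal K :=
  Ideal.span (Set.range f.coeff)

namespace ContentFlatAux

variable {K : Type} [CommRing K]

lemma coeff_mem_contentIdeal (f : K[X]) (n : ℕ) : f.coeff n ∈ f.contentIdeal' :=
  Ideal.subset_span ⟨n, rfl⟩

lemma mul_coeff_mem (f g : K[X]) (n : ℕ) : (f * g).coeff n ∈ f.contentIdeal' := by
  rw [coeff_mul]
  exact Ideal.sum_mem _ fun p _ => Ideal.mul_mem_right _ _ (coeff_mem_contentIdeal f p.1)

lemma contentIdeal_fg (f : K[X]) : f.contentIdeal'.FG := by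
  classical
  refine ⟨insert 0 f.coeffs, le_antisymm (Ideal.span_le.mpr ?_) (Ideal.span_le.mpr ?_)⟩
  · intro c hc
    simp only [Finset.coe_insert, Set.mem_insert_iff, Finset.mem_coe] at hc
    rcases hc with rfl | hc
    · exact Submodule.zero_mem _
    · obtain ⟨n, _, rfl⟩ := mem_coeffs_iff.mp hc
      exact coeff_mem_contentIdeal f n
  · intro c hc
    rcases hc with ⟨n, rfl⟩
    by_cases h : f.coeff n = 0
    · rw [h]; exact Submodule.zero_mem _
    · exact Ideal.subset_span
        (Finset.mem_coe.mpr (Finset.mem_insert_of_mem (f.coeff_mem_coeffs h)))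

lemma flat_forward (f : K[X]) (hF : Module.Flat K (K[X] ⧸ Ideal.span {f})) :
    IsIdempotentElem f.contentIdeal' := by
  classical
  haveI := hF
  set A := K[X] ⧸ Ideal.span {f}
  set π : K[X] →ₗ[K] A := (Ideal.Quotient.mkₐ K (Ideal.span {f})).toLinearMap with hπ
  set n := f.natDegree
  have hrel : ∑ i : Fin (n + 1), f.coeff ↑i • (π (X ^ (i : ℕ))) = 0 := by
    have : ∑ i : Fin (n + 1), f.coeff ↑i • (π (X ^ (i : ℕ)))
        = π (∑ i : Fin (n + 1), f.coeff ↑i • X ^ (i : ℕ)) := by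
      rw [map_sum]; simp
    rw [this]
    have hf : (∑ i : Fin (n + 1), f.coeff ↑i • X ^ (i : ℕ)) = f := by
      rw [Fin.sum_univ_eq_sum_range (fun i => f.coeff i • X ^ i) (n + 1)]
      simp_rw [smul_X_eq_monomial]
      exact (f.as_sum_range' (n + 1) (lt_add_one _)).symm
    rw [hf]
    show Ideal.Quotient.mk _ f = 0
    rw [Ideal.Quotient.eq_zero_iff_mem]
    exact Ideal.mem_span_singleton_self f
  obtain ⟨κ, a, y, hxy, hfa⟩ := Module.Flat.isTrivialRelation_of_sum_smul_eq_zero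
    (f := fun i : Fin (n + 1) => f.coeff ↑i) (x := fun i : Fin (n + 1) => π (X ^ (i : ℕ))) hrel
  have hxy' : ∀ i : Fin (n + 1), π (X ^ (i : ℕ)) = ∑ j, a i j • y j := hxy
  have hfa' : ∀ j, ∑ i : Fin (n + 1), f.coeff ↑i * a i j = 0 := hfa
  -- lift the y's
  choose Y hY using fun j => Ideal.Quotient.mkₐ_surjective K (Ideal.span {f}) (y j)
  -- difference polynomials
  have hDmem : ∀ (i : Fin (n + 1)) (k : ℕ),
      (X ^ (i : ℕ)).coeff k - ∑ j, a i j * (Y j).coeff k ∈ f.contentIdeal' := by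
    intro i k
    have hker : π (X ^ (i : ℕ) - ∑ j, a i j • Y j) = 0 := by
      rw [map_sub, map_sum]
      simp only [map_smul]
      have : ∀ j, π (Y j) = y j := fun j => hY j
      simp_rw [this]
      rw [hxy' i, sub_self]
    have hmem : X ^ (i : ℕ) - ∑ j, a i j • Y j ∈ Ideal.span {f} := by
      rwa [← Ideal.Quotient.eq_zero_iff_mem]
    obtain ⟨g, hg⟩ := Ideal.mem_span_singleton'.mp hmem
    have : (X ^ (i : ℕ) - ∑ j, a i j • Y j).coeff k ∈ f.contentIdeal' := by
      rw [← hg, mul_comm]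
      exact mul_coeff_mem f g k
    simpa [coeff_sub, Polynomial.finset_sum_coeff, coeff_smul, smul_eq_mul] using this
  -- every coefficient of f lies in I * I
  have key : ∀ m : ℕ, f.coeff m ∈ f.contentIdeal' * f.contentIdeal' := by
    intro m
    by_cases hm : m < n + 1
    · have h2 : f.coeff m = ∑ i : Fin (n + 1), f.coeff ↑i * (X ^ (i : ℕ)).coeff m := by
        rw [Finset.sum_eq_single (⟨m, hm⟩ : Fin (n + 1))]
        · simp [coeff_X_pow]
        · intro i _ hi
          have : m ≠ (i : ℕ) := by
            intro h; apply hi; exact Fin.ext (by simp [h])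
          simp [coeff_X_pow, this]
        · intro h; exact absurd (Finset.mem_univ _) h
      have h3 : ∀ i : Fin (n + 1), (X ^ (i : ℕ)).coeff m
          = (∑ j, a i j * (Y j).coeff m) + ((X ^ (i : ℕ)).coeff m - ∑ j, a i j * (Y j).coeff m) := by
        intro i; ring
      have h4 : ∑ i : Fin (n + 1), f.coeff ↑i * (X ^ (i : ℕ)).coeff m
          = ∑ i : Fin (n + 1), f.coeff ↑i *
              ((X ^ (i : ℕ)).coeff m - ∑ j, a i j * (Y j).coeff m) := by
        have step1 : ∑ i : Fin (n + 1), f.coeff ↑i * (X ^ (i : ℕ)).coeff m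
            = ∑ i : Fin (n + 1), (∑ j, f.coeff ↑i * (a i j * (Y j).coeff m))
              + ∑ i : Fin (n + 1), f.coeff ↑i *
                ((X ^ (i : ℕ)).coeff m - ∑ j, a i j * (Y j).coeff m) := by
          rw [← Finset.sum_add_distrib]
          refine Finset.sum_congr rfl fun i _ => ?_
          rw [← Finset.mul_sum, ← mul_add, ← h3 i]
        have step2 : ∀ j, ∑ i : Fin (n + 1), f.coeff ↑i * (a i j * (Y j).coeff m) = 0 := by
          intro j
          have : ∑ i : Fin (n + 1), f.coeff ↑i * (a i j * (Y j).coeff m)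
              = (∑ i : Fin (n + 1), f.coeff ↑i * a i j) * (Y j).coeff m := by
            rw [Finset.sum_mul]; exact Finset.sum_congr rfl fun i _ => by ring
          rw [this, hfa' j, zero_mul]
        rw [step1, Finset.sum_comm]
        simp [step2]
      rw [h2, h4]
      exact Ideal.sum_mem _ fun i _ =>
        Ideal.mul_mem_mul (coeff_mem_contentIdeal f ↑i) (hDmem i m)
    · rw [f.coeff_eq_zero_of_natDegree_lt (by omega)]
      exact Submodule.zero_mem _
  show f.contentIdeal' * f.contentIdeal' = f.contentIdeal'
  refine le_antisymm Ideal.mul_le_left ?_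
  rw [Polynomial.contentIdeal', Ideal.span_le]
  rintro _ ⟨m, rfl⟩
  exact key m

lemma smul_self {f : K[X]} {e : K} (he : IsIdempotentElem e)
    (hf : f.contentIdeal' ≤ Ideal.span {e}) : e • f = f := by
  ext n
  rw [coeff_smul, smul_eq_mul]
  obtain ⟨b, hb⟩ := Ideal.mem_span_singleton'.mp (hf (coeff_mem_contentIdeal f n))
  rw [← hb, ← mul_assoc, mul_comm e b, mul_assoc, he]

/-- B2 : McCoy-type lemma. -/
lemma mccoy {f : K[X]} {e : K} (he : IsIdempotentElem e)
    (hf : f.contentIdeal' = Ideal.span {e}) (I : Ideal K) (g : K[X])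
    (hfg : ∀ n, (f * g).coeff n ∈ I) : ∀ n, e * g.coeff n ∈ I := by
  set J := I ⊔ Ideal.span {1 - e} with hJ
  set σ := Ideal.Quotient.mk J with hσ
  have hIJ : I ≤ J := le_sup_left
  have hσe : σ e = 1 := by
    have h1 : σ (1 - e) = 0 := Ideal.Quotient.eq_zero_iff_mem.mpr
      (Ideal.mem_sup_right (Ideal.mem_span_singleton_self (1 - e)))
    have h2 := map_sub σ 1 e
    rw [h1, map_one] at h2
    exact (sub_eq_zero.mp h2.symm).symm
  have hmul0 : (g.map σ) * (f.map σ) = 0 := by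
    rw [← Polynomial.map_mul]
    ext n
    rw [coeff_map, coeff_zero, mul_comm g f, Ideal.Quotient.eq_zero_iff_mem]
    exact hIJ (hfg n)
  have hreg : f.map σ ∈ nonZeroDivisors (K ⧸ J)[X] := by
    rw [Polynomial.mem_nonZeroDivisors_iff]
    intro a ha
    have hcoef : ∀ n, a * σ (f.coeff n) = 0 := by
      intro n
      have := congrArg (fun p => Polynomial.coeff p n) ha
      simpa [coeff_smul, coeff_map, smul_eq_mul] using this
    -- the kernel of multiplication by `a` is an ideal containing all `σ (f.coeff n)`
    have hker : Ideal.span (σ '' Set.range f.coeff)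
        ≤ LinearMap.ker (LinearMap.mulLeft (K ⧸ J) a) := by
      rw [Ideal.span_le]
      rintro _ ⟨_, ⟨n, rfl⟩, rfl⟩
      exact LinearMap.mem_ker.mpr (hcoef n)
    have hemem : σ e ∈ Ideal.span (σ '' Set.range f.coeff) := by
      rw [← Ideal.map_span σ]
      exact Ideal.mem_map_of_mem σ
        (show e ∈ f.contentIdeal' by rw [hf]; exact Ideal.mem_span_singleton_self e)
    have : a * σ e = 0 := hker hemem
    calc a = a * σ e := by rw [hσe, mul_one]
      _ = 0 := this
  have hg0 : g.map σ = 0 := (mul_right_mem_nonZeroDivisors_eq_zero_iff hreg).mp hmul0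
  intro n
  have hn : g.coeff n ∈ J := by
    rw [← Ideal.Quotient.eq_zero_iff_mem]
    have := congrArg (fun p => Polynomial.coeff p n) hg0
    simpa [coeff_map] using this
  obtain ⟨u, hu, v, hv, huv⟩ := Submodule.mem_sup.mp hn
  obtain ⟨c, rfl⟩ := Ideal.mem_span_singleton'.mp hv
  have h0 : e * (1 - e) = 0 := by rw [mul_sub, mul_one, he, sub_self]
  have : e * g.coeff n = e * u := by
    rw [← huv, mul_add]
    have : e * (c * (1 - e)) = c * (e * (1 - e)) := by ring
    rw [this, h0, mul_zero, add_zero]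
  rw [this]
  exact Ideal.mul_mem_left _ e hu

lemma flat_backward (f : K[X]) {e : K} (he : IsIdempotentElem e)
    (hf : f.contentIdeal' = Ideal.span {e}) :
    Module.Flat K (K[X] ⧸ Ideal.span {f}) := by
  classical
  set A := K[X] ⧸ Ideal.span {f} with hA
  set π : K[X] →ₗ[K] A := (Ideal.Quotient.mkₐ K (Ideal.span {f})).toLinearMap with hπdef
  rw [Module.Flat.iff_rTensor_injective']
  intro I
  rw [← LinearMap.ker_eq_bot, Submodule.eq_bot_iff]
  intro t ht
  rw [LinearMap.mem_ker] at ht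
  obtain ⟨s, rfl⟩ := LinearMap.lTensor_surjective (I : Submodule K K) (g := π)
    (Ideal.Quotient.mkₐ_surjective K (Ideal.span {f})) t
  -- the coefficient-wise evaluation map
  set φ : (I : Submodule K K) ⊗[K] K[X] →ₗ[K] K[X] :=
    TensorProduct.lift ((LinearMap.lsmul K K[X]).comp (Submodule.subtype I)) with hφdef
  have hφ_tmul : ∀ (i : I) (p : K[X]), φ (i ⊗ₜ[K] p) = (i : K) • p := fun i p => rfl
  -- φ is injective since K[X] is flat
  haveI : Module.Free K K[X] := Module.Free.of_basis (Polynomial.basisMonomials K)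
  haveI : Module.Flat K K[X] := Module.Flat.of_free
  have hφinj : Function.Injective φ := by
    have hcomp : φ = (TensorProduct.lid K K[X]).toLinearMap ∘ₗ
        LinearMap.rTensor K[X] (Submodule.subtype I) := by
      apply TensorProduct.ext'
      intro i p
      simp [hφ_tmul]
    rw [hcomp]
    exact (TensorProduct.lid K K[X]).injective.comp
      (Module.Flat.rTensor_preserves_injective_linearMap (Submodule.subtype I)
        (Submodule.injective_subtype I))
  -- coefficients of φ s lie in I
  have hcoeffI : ∀ (s : (I : Submodule K K) ⊗[K] K[X]) (n : ℕ), (φ s).coeff n ∈ I := by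
    intro s
    induction s using TensorProduct.induction_on with
    | zero => intro n; simp
    | tmul i p =>
      intro n
      rw [hφ_tmul, coeff_smul, smul_eq_mul]
      exact Ideal.mul_mem_right _ _ i.2
    | add u v hu hv => intro n; rw [map_add, coeff_add]; exact Ideal.add_mem _ (hu n) (hv n)
  -- the commuting square
  have hcomm : ∀ s : (I : Submodule K K) ⊗[K] K[X],
      (TensorProduct.lid K A) ((LinearMap.rTensor A (Submodule.subtype I))
        ((LinearMap.lTensor (I : Submodule K K) π) s)) = π (φ s) := by
    intro s
    induction s using TensorProduct.induction_on with
    | zero => simp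
    | tmul i p => simp [hφ_tmul]
    | add u v hu hv => simp only [map_add, hu, hv]
  -- from ht, π (φ s) = 0
  have hπφ : π (φ s) = 0 := by rw [← hcomm s, ht, map_zero]
  have hmem : φ s ∈ Ideal.span {f} := by
    rw [← Ideal.Quotient.eq_zero_iff_mem]
    exact hπφ
  obtain ⟨g, hg⟩ := Ideal.mem_span_singleton'.mp hmem
  have hfg : ∀ n, (f * g).coeff n ∈ I := by
    intro n
    rw [mul_comm f g, hg]
    exact hcoeffI s n
  have hegI : ∀ k, e * g.coeff k ∈ I := mccoy he hf I g hfg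
  -- the alternative representative
  set s' : (I : Submodule K K) ⊗[K] K[X] :=
    ∑ k ∈ g.support, (⟨e * g.coeff k, hegI k⟩ : I) ⊗ₜ[K] (f * X ^ k) with hs'def
  have hφs' : φ s' = f * g := by
    rw [hs'def, map_sum]
    have : ∀ k ∈ g.support, φ ((⟨e * g.coeff k, hegI k⟩ : I) ⊗ₜ[K] (f * X ^ k))
        = f * ((e * g.coeff k) • X ^ k) := by
      intro k _
      rw [hφ_tmul]
      rw [smul_eq_C_mul, smul_eq_C_mul]
      ring
    rw [Finset.sum_congr rfl this, ← Finset.mul_sum]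
    have hsum : ∑ k ∈ g.support, (e * g.coeff k) • X ^ k = e • g := by
      conv_rhs => rw [g.as_sum_support]
      rw [Finset.smul_sum]
      refine Finset.sum_congr rfl fun k _ => ?_
      rw [smul_X_eq_monomial, smul_monomial, smul_eq_mul]
    rw [hsum]
    have hef : e • f = f := smul_self he (le_of_eq hf)
    calc f * (e • g) = e • (f * g) := by rw [mul_smul_comm]
      _ = (e • f) * g := by rw [smul_mul_assoc]
      _ = f * g := by rw [hef]
  have hss' : s = s' := by
    apply hφinj
    rw [hφs', mul_comm f g, hg]
  rw [hss', hs'def, map_sum]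
  have : ∀ k ∈ g.support, (LinearMap.lTensor (I : Submodule K K) π)
      ((⟨e * g.coeff k, hegI k⟩ : I) ⊗ₜ[K] (f * X ^ k)) = 0 := by
    intro k _
    rw [LinearMap.lTensor_tmul]
    have : π (f * X ^ k) = 0 := by
      show Ideal.Quotient.mk _ (f * X ^ k) = 0
      rw [Ideal.Quotient.eq_zero_iff_mem]
      exact Ideal.mul_mem_right _ _ (Ideal.mem_span_singleton_self f)
    rw [this, tmul_zero]
  rw [Finset.sum_congr rfl this]
  simp

end ContentFlatAux

theorem quotient_flat_iff_contentIdeal_idempotent (K : Type) [CommRing K] (f : Polynomial K) :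
    Module.Flat K (Polynomial K ⧸ Ideal.span {f}) ↔
      ∃ e : K, IsIdempotentElem e ∧ f.contentIdeal' = Ideal.span {e} := by
  constructor
  · intro hF
    obtain ⟨e, he, hfe⟩ := (Ideal.isIdempotentElem_iff_of_fg _
      (ContentFlatAux.contentIdeal_fg f)).mp (ContentFlatAux.flat_forward f hF)
    exact ⟨e, he, by rw [hfe, Ideal.submodule_span_eq]⟩
  · rintro ⟨e, he, hf⟩
    exact ContentFlatAux.flat_backward f he hf
end

section
/- Let K be a commutative ring and f ∈ K[x] a non-zero-divisor in K[x]. Then A = K[x]/(f) is flat as a K-module if and only if the content ideal c_f of f is the unit ideal of K. -/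
open Polynomial TensorProduct LinearMap


theorem mccoy_aux {K : Type} [CommRing K] {f : Polynomial K} (hc : Ideal.span (Set.range f.coeff) = ⊤) :
    ∀ m (g : Polynomial K), g.natDegree ≤ m → f * g = 0 → g = 0 := by
  intro m
  induction m using Nat.strong_induction_on with
  | _ m ih =>
    intro g hdeg hfg
    have key : ∀ d i, f.natDegree < i + d → f.coeff i • g = 0 := by
      intro d
      induction d with
      | zero =>
        intro i hi
        rw [f.coeff_eq_zero_of_natDegree_lt (by omega), zero_smul]
      | succ d ihd =>
        intro i hi
        by_cases hle : f.natDegree < i + d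
        · exact ihd i hle
        have hco : ∀ j, i < j → f.coeff j • g = 0 := fun j hj => ihd j (by omega)
        have h1 : f.coeff i * g.coeff g.natDegree = 0 := by
          have h2 := congrArg (fun p => p.coeff (i + g.natDegree)) hfg
          simp only [coeff_mul, coeff_zero] at h2
          rw [← h2]
          rw [Finset.sum_eq_single (i, g.natDegree)]
          · rintro ⟨j, k⟩ hmem hne
            rw [Finset.HasAntidiagonal.mem_antidiagonal] at hmem
            rcases lt_trichotomy j i with h | h | h
            · rw [g.coeff_eq_zero_of_natDegree_lt (by omega), mul_zero]
            · exact absurd (by subst h; simp at hmem; simp [hmem]) hne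
            · have h3 := congrArg (fun p => p.coeff k) (hco j h)
              simpa [coeff_smul, smul_eq_mul] using h3
          · intro h; exact absurd (Finset.HasAntidiagonal.mem_antidiagonal.mpr (by simp)) h
        rcases Nat.eq_zero_or_pos g.natDegree with h0 | h0
        · have hg : g = C (g.coeff 0) := g.eq_C_of_natDegree_eq_zero h0
          rw [hg, smul_C, smul_eq_mul, ← h0, h1, map_zero]
        · set g' := f.coeff i • g with hg'
          have hfg' : f * g' = 0 := by
            rw [hg', mul_smul_comm, hfg, smul_zero]
          have hdeg' : g'.natDegree ≤ g.natDegree - 1 := by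
            rw [natDegree_le_iff_coeff_eq_zero]
            intro n hn
            rw [hg', coeff_smul, smul_eq_mul]
            rcases eq_or_lt_of_le (show g.natDegree ≤ n by omega) with h | h
            · rw [← h, h1]
            · rw [g.coeff_eq_zero_of_natDegree_lt h, mul_zero]
          exact ih (g.natDegree - 1) (by omega) g' hdeg' hfg'
    have hz : ∀ i, f.coeff i • g = 0 := fun i => key (f.natDegree + 1) i (by omega)
    have hle : Ideal.span (Set.range f.coeff) ≤ (Submodule.span K {g}).annihilator := by
      rw [Ideal.span_le]
      rintro a ⟨i, rfl⟩
      rw [SetLike.mem_coe, Submodule.mem_annihilator_span_singleton]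
      exact hz i
    have h1 : (1 : K) ∈ (Submodule.span K {g}).annihilator := hle (hc ▸ Submodule.mem_top)
    rw [Submodule.mem_annihilator_span_singleton, one_smul] at h1
    exact h1

theorem mem_map_C_of_mul_mem {K : Type} [CommRing K] {f : Polynomial K} (hc : Ideal.span (Set.range f.coeff) = ⊤)
    (I : Ideal K) {g : Polynomial K} (h : f * g ∈ I.map (C : K →+* Polynomial K)) :
    g ∈ I.map (C : K →+* Polynomial K) := by
  rw [Ideal.mem_map_C_iff] at h ⊢
  set φ := Ideal.Quotient.mk I with hφ
  have hmap : f.map φ * g.map φ = 0 := by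
    rw [← Polynomial.map_mul]
    ext n
    simp only [coeff_map, coeff_zero]
    exact Ideal.Quotient.eq_zero_iff_mem.mpr (h n)
  have hctop : Ideal.span (Set.range (f.map φ).coeff) = ⊤ := by
    have h1 : Set.range (f.map φ).coeff = φ '' Set.range f.coeff := by
      rw [← Set.range_comp]
      ext n
      simp [coeff_map]
    rw [h1, ← Ideal.map_span, hc]
    exact Ideal.map_top φ
  have hg0 : g.map φ = 0 := mccoy_aux hctop (g.map φ).natDegree (g.map φ) le_rfl hmap
  intro n
  have := congrArg (fun p => p.coeff n) hg0
  simp only [coeff_map, coeff_zero] at this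
  exact Ideal.Quotient.eq_zero_iff_mem.mp this

section Aux

variable {K : Type} [CommRing K]

instance flatPoly : Module.Flat K (Polynomial K) :=
  have : Module.Free K (Polynomial K) := Module.Free.of_basis (Polynomial.basisMonomials K)
  Module.Flat.of_free (R := K) (M := Polynomial K)

/-- The natural map `I ⊗ K[X] → K[X]`. -/
noncomputable def jmap (I : Ideal K) : (I ⊗[K] Polynomial K) →ₗ[K] Polynomial K :=
  (TensorProduct.lid K (Polynomial K)).toLinearMap ∘ₗ rTensor (Polynomial K) I.subtype

lemma jmap_tmul (I : Ideal K) (i : I) (p : Polynomial K) :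
    jmap I (i ⊗ₜ p) = C (i : K) * p := by
  simp [jmap, smul_eq_C_mul]

lemma jmap_inj (I : Ideal K) : Function.Injective (jmap I) :=
  (TensorProduct.lid K (Polynomial K)).injective.comp
    ((Module.Flat.iff_rTensor_injective' (R := K) (M := Polynomial K)).mp inferInstance I)

lemma jmap_coeff_mem (I : Ideal K) (u : I ⊗[K] Polynomial K) (n : ℕ) :
    (jmap I u).coeff n ∈ I := by
  induction u with
  | zero => simp
  | tmul i p => rw [jmap_tmul]; simpa [coeff_C_mul] using I.mul_mem_right _ i.2
  | add x y hx hy => rw [map_add, coeff_add]; exact I.add_mem hx hy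

lemma jmap_lift (I : Ideal K) (p : Polynomial K) (hp : ∀ n, p.coeff n ∈ I) :
    ∃ u : I ⊗[K] Polynomial K, jmap I u = p := by
  refine ⟨∑ n ∈ Finset.range (p.natDegree + 1),
    ((⟨p.coeff n, hp n⟩ : I) ⊗ₜ[K] ((X : Polynomial K) ^ n)), ?_⟩
  rw [map_sum]
  conv_rhs => rw [p.as_sum_range' (p.natDegree + 1) (Nat.lt_succ_self _)]
  refine Finset.sum_congr rfl fun n _ => ?_
  rw [jmap_tmul, C_mul_X_pow_eq_monomial]

/-- The projection to the quotient, as a `K`-linear map. -/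
noncomputable def projJ (J : Ideal (Polynomial K)) :
    Polynomial K →ₗ[K] (Polynomial K ⧸ J) :=
  (Ideal.Quotient.mkₐ K J).toLinearMap

lemma projJ_surj (J : Ideal (Polynomial K)) : Function.Surjective (projJ J) :=
  Ideal.Quotient.mk_surjective

lemma projJ_eq_zero_iff (J : Ideal (Polynomial K)) (p : Polynomial K) :
    projJ J p = 0 ↔ p ∈ J := by
  simp only [projJ, AlgHom.toLinearMap_apply, Ideal.Quotient.mkₐ_eq_mk]
  exact Ideal.Quotient.eq_zero_iff_mem

/-- The natural map `I ⊗ (K[X]/J) → K[X]/J`. -/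
noncomputable def jqmap (J : Ideal (Polynomial K)) (I : Ideal K) :
    (I ⊗[K] (Polynomial K ⧸ J)) →ₗ[K] (Polynomial K ⧸ J) :=
  (TensorProduct.lid K (Polynomial K ⧸ J)).toLinearMap ∘ₗ rTensor (Polynomial K ⧸ J) I.subtype

lemma jqmap_comm (J : Ideal (Polynomial K)) (I : Ideal K) :
    (jqmap J I) ∘ₗ lTensor I (projJ J) = (projJ J) ∘ₗ jmap I := by
  ext i p
  simp only [AlgebraTensorModule.curry_apply, curry_apply, coe_restrictScalars, coe_comp,
    Function.comp_apply, lTensor_tmul, jqmap, jmap, LinearEquiv.coe_coe, rTensor_tmul,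
    Submodule.coe_subtype, lid_tmul]
  rw [← map_smul, smul_eq_C_mul]

lemma jqmap_rTensor_eq (J : Ideal (Polynomial K)) (I : Ideal K) (t : I ⊗[K] (Polynomial K ⧸ J)) :
    rTensor (Polynomial K ⧸ J) I.subtype t = 0 ↔ jqmap J I t = 0 := by
  constructor
  · intro h
    have h2 : jqmap J I t = (TensorProduct.lid K (Polynomial K ⧸ J)).toLinearMap
        (rTensor (Polynomial K ⧸ J) I.subtype t) := rfl
    rw [h2, h, LinearMap.map_zero]
  · intro h
    rw [← (TensorProduct.lid K (Polynomial K ⧸ J)).map_eq_zero_iff]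
    simp only [jqmap, coe_comp, LinearEquiv.coe_coe, Function.comp_apply] at h
    exact h

end Aux

set_option maxHeartbeats 1000000 in
set_option synthInstance.maxHeartbeats 100000 in
theorem quotient_flat_iff_contentIdeal_top (K : Type) [CommRing K] (f : Polynomial K)
    (hf : f ∈ nonZeroDivisors (Polynomial K)) :
    Module.Flat K (Polynomial K ⧸ Ideal.span {f}) ↔ f.contentIdeal' = ⊤ := by
  constructor
  · -- flat → content = ⊤
    intro hflat
    set c := f.contentIdeal' with hc
    set J : Ideal (Polynomial K) := Ideal.span {f} with hJ
    obtain ⟨t₀, ht₀⟩ := jmap_lift c f (fun n => Ideal.subset_span (Set.mem_range_self n))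
    have htzero : lTensor c (projJ J) t₀ = 0 := by
      apply (Module.Flat.iff_rTensor_injective' (R := K) (M := _)).mp hflat c
      rw [map_zero, jqmap_rTensor_eq, ← comp_apply, jqmap_comm, comp_apply, ht₀,
        projJ_eq_zero_iff]
      exact Ideal.mem_span_singleton_self f
    have hexact0 : Function.Exact ((J.restrictScalars K).subtype) (projJ J) := by
      intro y
      rw [projJ_eq_zero_iff]
      constructor
      · intro hy; exact ⟨⟨y, hy⟩, rfl⟩
      · rintro ⟨⟨y, hy⟩, rfl⟩; exact hy
    have hexact := lTensor_exact (c : Type) hexact0 (projJ_surj J)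
    obtain ⟨w, hw⟩ := (hexact t₀).mp htzero
    have hgen : ∀ w : c ⊗[K] (J.restrictScalars K),
        jmap c (lTensor c (J.restrictScalars K).subtype w) ∈ J * c.map (C : K →+* Polynomial K) := by
      intro w
      induction w with
      | zero => simp
      | tmul i q =>
        rw [lTensor_tmul, jmap_tmul]
        have h3 : (Submodule.restrictScalars K J).subtype q = (q : Polynomial K) := rfl
        rw [h3, mul_comm (C (i : K)) (q : Polynomial K)]
        exact Ideal.mul_mem_mul ((Submodule.restrictScalars_mem K J _).mp q.2)
          (Ideal.mem_map_of_mem _ i.2)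
      | add x y hx hy => rw [map_add, map_add]; exact Ideal.add_mem _ hx hy
    have hmem : f ∈ J * c.map (C : K →+* Polynomial K) := by
      rw [← ht₀, ← hw]; exact hgen w
    rw [hJ, Ideal.mem_span_singleton_mul] at hmem
    obtain ⟨z, hz, hfz⟩ := hmem
    have hz1 : z = 1 := by
      have h0 : (z - 1) * f = 0 := by
        rw [sub_mul, one_mul, mul_comm, hfz, sub_self]
      have := (mem_nonZeroDivisors_iff.mp hf).2 _ h0
      exact sub_eq_zero.mp this
    rw [hz1] at hz
    rw [hc, Polynomial.contentIdeal', Ideal.eq_top_iff_one]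
    simpa [hc, Polynomial.contentIdeal'] using Ideal.mem_map_C_iff.mp hz 0
  · -- content = ⊤ → flat
    intro hc
    set J : Ideal (Polynomial K) := Ideal.span {f} with hJ
    rw [Module.Flat.iff_rTensor_injective']
    intro I
    rw [injective_iff_map_eq_zero]
    intro t ht
    obtain ⟨s, hs⟩ := lTensor_surjective (I : Type) (projJ_surj J) t
    have hπjs : projJ J (jmap I s) = 0 := by
      rw [← comp_apply, ← jqmap_comm, comp_apply, hs]
      exact (jqmap_rTensor_eq J I t).mp ht
    rw [projJ_eq_zero_iff, hJ] at hπjs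
    obtain ⟨h, hh⟩ := Ideal.mem_span_singleton'.mp hπjs
    rw [mul_comm] at hh
    have hhmem : h ∈ I.map (C : K →+* Polynomial K) := by
      apply mem_map_C_of_mul_mem hc I
      rw [hh, Ideal.mem_map_C_iff]
      exact jmap_coeff_mem I s
    obtain ⟨u, hu⟩ := jmap_lift I h (Ideal.mem_map_C_iff.mp hhmem)
    have heq : ∀ u : I ⊗[K] Polynomial K,
        jmap I (lTensor I (LinearMap.mulLeft K f) u) = f * jmap I u := by
      intro u
      induction u with
      | zero => simp
      | tmul i p =>
        rw [lTensor_tmul, jmap_tmul, jmap_tmul, mulLeft_apply]; ring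
      | add x y hx hy => rw [map_add, map_add, map_add, mul_add, hx, hy]
    have hsu : s = lTensor I (LinearMap.mulLeft K f) u := by
      apply jmap_inj I
      rw [heq, hu, ← hh]
    have hcomp : (projJ J) ∘ₗ (LinearMap.mulLeft K f) = 0 := by
      refine LinearMap.ext fun p => ?_
      simp only [coe_comp, Function.comp_apply, mulLeft_apply, LinearMap.zero_apply]
      rw [projJ_eq_zero_iff, hJ]
      exact Ideal.mem_span_singleton'.mpr ⟨p, mul_comm p f⟩
    rw [← hs, hsu, ← comp_apply, ← lTensor_comp, hcomp, lTensor_zero, LinearMap.zero_apply]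
end

section
/- Let K be a commutative ring, f ∈ K[x], and A = K[x]/(f). Then the A-module Der_K(A,A) of K-linear derivations of A into itself is isomorphic, via D ↦ D(x̄), to the annihilator θ = {a ∈ A : a · (f' mod f) = 0} of the class of the derivative f' in A. -/
/-!
Statement 13: for `A = K[x]/(f)`, the `A`-module `Der_K(A, A)` of `K`-linear derivations
is isomorphic, via `D ↦ D x̄`, to the annihilator `θ = {a : A | a * (f' mod f) = 0}` of
the class of the derivative `f'` in `A`.
-/

/-- The annihilator `{a : A | a * x = 0}` of an element `x` of a commutative ring `A`,
as an ideal of `A`. -/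
def elemAnnihilator {A : Type} [CommRing A] (x : A) : Ideal A where
  carrier := {a : A | a * x = 0}
  add_mem' := by
    intro a b ha hb
    simp only [Set.mem_setOf_eq] at *
    rw [add_mul, ha, hb, add_zero]
  zero_mem' := by simp
  smul_mem' := by
    intro c a ha
    simp only [Set.mem_setOf_eq, smul_eq_mul] at *
    rw [mul_assoc, ha, mul_zero]

open Polynomial

section Aux

variable {K : Type} [CommRing K] (f : Polynomial K)

lemma elemAnnihilator_mem_iff {A : Type} [CommRing A] (x a : A) :
    a ∈ elemAnnihilator x ↔ a * x = 0 := Iff.rfl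

/-- Key: any K-derivation on the quotient is determined by its value at X̄. -/
lemma derivation_key (D : Derivation K (Polynomial K ⧸ Ideal.span {f}) (Polynomial K ⧸ Ideal.span {f})) (g : Polynomial K) :
    D (Ideal.Quotient.mk (Ideal.span {f}) g)
      = derivative g • D (Ideal.Quotient.mk (Ideal.span {f}) X) := by
  have h : D.compAlgebraMap (Polynomial K)
      = Polynomial.mkDerivation K (D (Ideal.Quotient.mk (Ideal.span {f}) X)) := by
    apply Polynomial.derivation_ext
    simp [Derivation.compAlgebraMap_apply]
  have := congrArg (fun d => d g) (congrArg DFunLike.coe h)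
  simpa [Derivation.compAlgebraMap_apply, Polynomial.mkDerivation_apply,
    Ideal.Quotient.algebraMap_eq] using this

lemma derivation_mem_ann (D : Derivation K (Polynomial K ⧸ Ideal.span {f}) (Polynomial K ⧸ Ideal.span {f})) :
    D (Ideal.Quotient.mk (Ideal.span {f}) X)
      ∈ elemAnnihilator (Ideal.Quotient.mk (Ideal.span {f}) (derivative f)) := by
  have h := derivation_key f D f
  rw [show (Ideal.Quotient.mk (Ideal.span {f}) f : Polynomial K ⧸ Ideal.span {f}) = 0 by
    simp [Ideal.Quotient.eq_zero_iff_mem, Ideal.mem_span_singleton]] at h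
  simp only [map_zero] at h
  have hs : (derivative f : Polynomial K) • D (Ideal.Quotient.mk (Ideal.span {f}) X)
      = Ideal.Quotient.mk (Ideal.span {f}) (derivative f)
        * D (Ideal.Quotient.mk (Ideal.span {f}) X) := by
    obtain ⟨p, hp⟩ := Ideal.Quotient.mk_surjective (D (Ideal.Quotient.mk (Ideal.span {f}) X))
    rw [← hp, ← map_mul]
    rfl
  rw [elemAnnihilator_mem_iff, mul_comm, ← hs, ← h]

lemma quot_smul (r : Polynomial K) (q : Polynomial K ⧸ Ideal.span {f}) :
    r • q = Ideal.Quotient.mk (Ideal.span {f}) r * q := by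
  obtain ⟨p, rfl⟩ := Ideal.Quotient.mk_surjective q
  rw [← map_mul]
  rfl

/-- The underlying function of the inverse: `mk g ↦ mk g' * a`. -/
noncomputable def invFun0 (a : Polynomial K ⧸ Ideal.span {f})
    (ha : a * Ideal.Quotient.mk (Ideal.span {f}) (derivative f) = 0) :
    (Polynomial K ⧸ Ideal.span {f}) → (Polynomial K ⧸ Ideal.span {f}) := fun q =>
  Quotient.liftOn' q (fun g => Ideal.Quotient.mk (Ideal.span {f}) (derivative g) * a)
    (by
      intro g h hgh
      have hgh' : g - h ∈ Ideal.span {f} := by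
        rwa [Submodule.quotientRel_def] at hgh
      obtain ⟨c, hc⟩ := Ideal.mem_span_singleton'.mp hgh'
      have hg : g = c * f + h := by rw [hc]; ring
      simp only [hg, derivative_add, derivative_mul, map_add, map_mul]
      have h0 : (Ideal.Quotient.mk (Ideal.span {f}) f : Polynomial K ⧸ Ideal.span {f}) = 0 := by
        simp [Ideal.Quotient.eq_zero_iff_mem, Ideal.mem_span_singleton]
      rw [h0]
      linear_combination (Ideal.Quotient.mk (Ideal.span {f}) c) * ha)

lemma invFun0_mk (a : Polynomial K ⧸ Ideal.span {f})
    (ha : a * Ideal.Quotient.mk (Ideal.span {f}) (derivative f) = 0) (g : Polynomial K) :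
    invFun0 f a ha (Ideal.Quotient.mk (Ideal.span {f}) g)
      = Ideal.Quotient.mk (Ideal.span {f}) (derivative g) * a := rfl

/-- The inverse: the derivation attached to an annihilator element. -/
noncomputable def invDer (a : Polynomial K ⧸ Ideal.span {f})
    (ha : a * Ideal.Quotient.mk (Ideal.span {f}) (derivative f) = 0) :
    Derivation K (Polynomial K ⧸ Ideal.span {f}) (Polynomial K ⧸ Ideal.span {f}) where
  toFun := invFun0 f a ha
  map_add' p q := by
    obtain ⟨g, rfl⟩ := Ideal.Quotient.mk_surjective p
    obtain ⟨h, rfl⟩ := Ideal.Quotient.mk_surjective q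
    rw [← map_add, invFun0_mk, invFun0_mk, invFun0_mk, derivative_add, map_add, add_mul]
  map_smul' c q := by
    obtain ⟨g, rfl⟩ := Ideal.Quotient.mk_surjective q
    show invFun0 f a ha (Ideal.Quotient.mk (Ideal.span {f}) (c • g))
      = c • invFun0 f a ha (Ideal.Quotient.mk (Ideal.span {f}) g)
    rw [invFun0_mk, invFun0_mk, derivative_smul]
    have h2 : Ideal.Quotient.mk (Ideal.span {f}) (c • derivative g)
        = c • Ideal.Quotient.mk (Ideal.span {f}) (derivative g) := rfl
    rw [h2, smul_mul_assoc]
  map_one_eq_zero' := by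
    have h1 : (1 : Polynomial K ⧸ Ideal.span {f}) = Ideal.Quotient.mk (Ideal.span {f}) 1 := rfl
    show invFun0 f a ha 1 = 0
    rw [h1, invFun0_mk]
    simp
  leibniz' p q := by
    obtain ⟨g, rfl⟩ := Ideal.Quotient.mk_surjective p
    obtain ⟨h, rfl⟩ := Ideal.Quotient.mk_surjective q
    show invFun0 f a ha (Ideal.Quotient.mk (Ideal.span {f}) g * Ideal.Quotient.mk (Ideal.span {f}) h)
      = Ideal.Quotient.mk (Ideal.span {f}) g • invFun0 f a ha (Ideal.Quotient.mk (Ideal.span {f}) h)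
        + Ideal.Quotient.mk (Ideal.span {f}) h • invFun0 f a ha (Ideal.Quotient.mk (Ideal.span {f}) g)
    rw [← map_mul, invFun0_mk, invFun0_mk, invFun0_mk, derivative_mul, map_add, add_mul,
      map_mul, map_mul, smul_eq_mul, smul_eq_mul]
    ring

end Aux

theorem derivations_iso_annihilator_of_derivative
    (K : Type) [CommRing K] (f : Polynomial K) :
    ∃ e : Derivation K (Polynomial K ⧸ Ideal.span {f}) (Polynomial K ⧸ Ideal.span {f}) ≃ₗ[Polynomial K ⧸ Ideal.span {f}]
        elemAnnihilator (Ideal.Quotient.mk (Ideal.span {f}) (Polynomial.derivative f)),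
      ∀ D, (e D : Polynomial K ⧸ Ideal.span {f}) =
        D (Ideal.Quotient.mk (Ideal.span {f}) Polynomial.X) := by
  refine ⟨{ toFun := fun D => ⟨D (Ideal.Quotient.mk (Ideal.span {f}) X), derivation_mem_ann f D⟩
            map_add' := fun D₁ D₂ => rfl
            map_smul' := fun q D => rfl
            invFun := fun a => invDer f a.1 a.2
            left_inv := ?_
            right_inv := ?_ }, fun D => rfl⟩
  · intro D
    apply Derivation.ext
    intro q
    obtain ⟨g, rfl⟩ := Ideal.Quotient.mk_surjective q
    rw [derivation_key f D g, quot_smul]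
    exact invFun0_mk f (D (Ideal.Quotient.mk (Ideal.span {f}) X)) (derivation_mem_ann f D) g
  · intro a
    apply Subtype.ext
    have h := invFun0_mk f a.1 a.2 X
    rw [derivative_X, map_one, one_mul] at h
    exact h
end

section
/- Let K be a commutative ring and f, a, b ∈ K[x]. If a·f' ∈ (f) and b·f' ∈ (f), then a·b·f'' ∈ (f), where f' and f'' denote the first and second derivatives of f and (f) is the principal ideal generated by f in K[x]. -/
/-!
Statement 14: if `a·f' ∈ (f)` and `b·f' ∈ (f)` in `K[x]`, then `a·b·f'' ∈ (f)`.
-/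

theorem mul_mul_second_derivative_mem_span
    (K : Type) [CommRing K] (f a b : Polynomial K)
    (ha : a * Polynomial.derivative f ∈ Ideal.span {f})
    (hb : b * Polynomial.derivative f ∈ Ideal.span {f}) :
    a * b * Polynomial.derivative (Polynomial.derivative f) ∈ Ideal.span {f} := by
  rw [Ideal.mem_span_singleton] at ha hb ⊢
  obtain ⟨u, hu⟩ := ha
  obtain ⟨v, hv⟩ := hb
  refine ⟨u * v + Polynomial.derivative u * b - Polynomial.derivative a * v, ?_⟩
  have key := congrArg (fun p => Polynomial.derivative p * b) hu
  simp only [Polynomial.derivative_mul] at key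
  -- key : (a' * f' + a * f'') * b = (f' * u + f * u') * b
  linear_combination key + (u - Polynomial.derivative a) * hv
end
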